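/- arXiv:math/0402222 — 5 statements merged into one kernel-verified Lean document; each statement's English description precedes it below -/
import Mathlib

section
/- Let f : ℝ → ℝ be of class C^n near 0 with f(t) = t^m g(t) near 0 for a continuous function g, where m < n is the order of flatness of f at 0 (the supremum of integers p with f(t) = t^p h(t) for continuous h). Then g is of class C^{n-m} near 0 and g(0) ≠ 0. -/
/-!
Multiplying `f` and `g` by a smooth bump function equal to `1` near `0` makes the factorization
`f t = t ^ m * g t` global. Globally, Hadamard's lemma `(f t - f 0) / t = ∫₀¹ f' (s t) ds` shows
that dividing a `C^(k+1)` function vanishing at `0` by `t` leaves a `C^k` function, so `g` is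
`C^(n-m)`. As `n - m ≥ 1`, `g` is then differentiable, and `g 0 = 0` would give
`g t = t * dslope g 0 t` with a continuous second factor, i.e. a factorization by `t ^ (m + 1)`.
-/

open Metric Set intervalIntegral

theorem ContDiffOn.contDiff_smul_of_tsupport_subset {𝕜 E F : Type*} [NontriviallyNormedField 𝕜]
    [NormedAddCommGroup E] [NormedSpace 𝕜 E] [NormedAddCommGroup F] [NormedSpace 𝕜 F]
    {n : WithTop ℕ∞} {U : Set E} {φ : E → 𝕜} {f : E → F} (hf : ContDiffOn 𝕜 n f U)
    (hU : IsOpen U) (hφ : ContDiff 𝕜 n φ) (hφU : tsupport φ ⊆ U) :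
    ContDiff 𝕜 n (fun x => φ x • f x) := by
  refine contDiff_iff_contDiffAt.2 fun x => ?_
  by_cases hx : x ∈ U
  · exact hφ.contDiffAt.smul (hf.contDiffAt (hU.mem_nhds hx))
  · refine contDiffAt_const (c := (0 : F)).congr_of_eventuallyEq ?_
    filter_upwards [notMem_tsupport_iff_eventuallyEq.1 (fun h => hx (hφU h))] with y hy
    simp [hy]

theorem hasDerivAt_integral_mul_comp_mul {w φ : ℝ → ℝ} (hw : Continuous w) (hφ : ContDiff ℝ 1 φ)
    (t₀ : ℝ) :
    HasDerivAt (fun t => ∫ s in (0 : ℝ)..1, w s * φ (s * t))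
      (∫ s in (0 : ℝ)..1, w s * s * deriv φ (s * t₀)) t₀ := by
  have hφ' : Continuous (deriv φ) := hφ.continuous_deriv le_rfl
  obtain ⟨C, hC⟩ : ∃ C, ∀ p ∈ Icc (0 : ℝ) 1 ×ˢ closedBall t₀ 1,
      ‖w p.1 * p.1 * deriv φ (p.1 * p.2)‖ ≤ C :=
    (isCompact_Icc.prod (isCompact_closedBall t₀ 1)).exists_bound_of_continuousOn
      (by fun_prop)
  refine (hasDerivAt_integral_of_dominated_loc_of_deriv_le (bound := fun _ => C)
    (F := fun t s => w s * φ (s * t)) (F' := fun t s => w s * s * deriv φ (s * t))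
    (ball_mem_nhds t₀ one_pos) (.of_forall fun t => by fun_prop)
    ((by fun_prop : Continuous _).intervalIntegrable 0 1) (by fun_prop)
    (.of_forall fun s hs x hx => hC (s, x) ⟨?_, ball_subset_closedBall hx⟩)
    intervalIntegrable_const (.of_forall fun s _ x _ => ?_)).2
  · exact Ioc_subset_Icc_self (by simpa using hs)
  · have := ((hφ.differentiable one_ne_zero (s * x)).hasDerivAt.comp x
      ((hasDerivAt_id x).const_mul s)).const_mul (w s)
    exact this.congr_deriv (by ring)

theorem contDiff_integral_mul_comp_mul {k : ℕ} {w φ : ℝ → ℝ} (hw : Continuous w)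
    (hφ : ContDiff ℝ k φ) : ContDiff ℝ k (fun t => ∫ s in (0 : ℝ)..1, w s * φ (s * t)) := by
  induction k generalizing w φ with
  | zero =>
    exact contDiff_zero.2 <|
      continuous_parametric_intervalIntegral_of_continuous' (by fun_prop) 0 1
  | succ k ih =>
    have hφ1 : ContDiff ℝ 1 φ := hφ.of_le (by exact_mod_cast Nat.le_add_left 1 k)
    rw [Nat.cast_add_one, contDiff_succ_iff_deriv] at hφ ⊢
    refine ⟨fun t => (hasDerivAt_integral_mul_comp_mul hw hφ1 t).differentiableAt, by simp, ?_⟩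
    rw [funext fun t => (hasDerivAt_integral_mul_comp_mul hw hφ1 t).deriv]
    exact ih (by fun_prop) hφ.2.2

theorem dslope_zero_eq_integral_deriv {f : ℝ → ℝ} (hf : ContDiff ℝ 1 f) :
    dslope f 0 = fun t => ∫ s in (0 : ℝ)..1, deriv f (s * t) := by
  funext t
  rcases eq_or_ne t 0 with rfl | ht
  · simp [dslope_same]
  · have hftc : ∫ u in (0 : ℝ)..t, deriv f u = f t - f 0 :=
      integral_deriv_eq_sub (fun x _ => hf.differentiable one_ne_zero x)
        ((hf.continuous_deriv le_rfl).intervalIntegrable 0 t)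
    rw [dslope_of_ne _ ht, slope_def_field, integral_comp_mul_right (fun u => deriv f u) ht,
      zero_mul, one_mul, hftc, smul_eq_mul, sub_zero, inv_mul_eq_div]

theorem contDiff_dslope_zero {k : ℕ} {f : ℝ → ℝ} (hf : ContDiff ℝ (k + 1) f) :
    ContDiff ℝ k (dslope f 0) := by
  rw [dslope_zero_eq_integral_deriv (hf.of_le le_add_self)]
  simpa using contDiff_integral_mul_comp_mul (w := fun _ => 1) continuous_const
    (contDiff_succ_iff_deriv.1 hf).2.2

theorem dslope_zero_eq_pow_mul {m : ℕ} {f G : ℝ → ℝ} (hD : Continuous (dslope f 0))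
    (hG : Continuous G) (hfG : ∀ t, f t = t ^ (m + 1) * G t) :
    dslope f 0 = fun t => t ^ m * G t := by
  refine Continuous.ext_on (dense_compl_singleton 0) hD (by fun_prop) fun t ht => ?_
  have ht : t ≠ 0 := ht
  rw [dslope_of_ne _ ht, slope_def_field, hfG, hfG]
  field_simp
  ring

theorem contDiff_of_eq_pow_mul {m n : ℕ} {f G : ℝ → ℝ} (hmn : m ≤ n) (hf : ContDiff ℝ n f)
    (hG : Continuous G) (hfG : ∀ t, f t = t ^ m * G t) : ContDiff ℝ (n - m : ℕ) G := by
  induction m generalizing n f with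
  | zero => simpa [show G = f from funext fun t => by simp [hfG]] using hf
  | succ m ih =>
    obtain ⟨n, rfl⟩ := Nat.exists_eq_add_of_le' (Nat.zero_lt_of_lt hmn)
    have hD : ContDiff ℝ n (dslope f 0) := contDiff_dslope_zero (by exact_mod_cast hf)
    rw [Nat.add_sub_add_right]
    exact ih (by omega) hD fun t => by rw [dslope_zero_eq_pow_mul hD.continuous hG hfG]

/-- If `f` is `C^n` near `0` and `f(t) = t^m g(t)` near `0` with `g` continuous, where
`m < n` is the order of flatness of `f` at `0` (i.e. no factorization `t^(m+1) · h(t)` with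
`h` continuous is possible), then `g` is `C^(n-m)` near `0` and `g 0 ≠ 0`. -/
theorem multiplicity_factor_regularity
    (n m : ℕ) (hmn : m < n) (f g : ℝ → ℝ) (ε : ℝ) (hε : 0 < ε)
    (hf : ContDiffOn ℝ n f (ball (0 : ℝ) ε))
    (hg : ContinuousOn g (ball (0 : ℝ) ε))
    (heq : ∀ t ∈ ball (0 : ℝ) ε, f t = t ^ m * g t)
    (hmax : ¬ ∃ (h : ℝ → ℝ) (δ : ℝ), 0 < δ ∧ ContinuousOn h (ball (0 : ℝ) δ) ∧
        ∀ t ∈ ball (0 : ℝ) δ, f t = t ^ (m + 1) * h t) :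
    ∃ δ > 0, ContDiffOn ℝ (n - m) g (ball (0 : ℝ) δ) ∧ g 0 ≠ 0 := by
  let χ : ContDiffBump (0 : ℝ) := ⟨ε / 4, ε / 2, by positivity, by linarith⟩
  have hχ : tsupport χ ⊆ ball 0 ε :=
    χ.tsupport_eq ▸ closedBall_subset_ball (by simp [χ]; linarith)
  have hχ_one : ∀ t ∈ ball (0 : ℝ) (ε / 4), χ t = 1 :=
    fun t ht => χ.one_of_mem_closedBall (ball_subset_closedBall ht)
  set G := fun t => χ t • g t
  have hG : Continuous G := contDiff_zero.1 <|
    (contDiffOn_zero.2 hg).contDiff_smul_of_tsupport_subset isOpen_ball χ.contDiff hχ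
  have hχfG : ∀ t, χ t • f t = t ^ m * G t := fun t => by
    by_cases ht : t ∈ ball 0 ε
    · simp only [G, smul_eq_mul, heq t ht]; ring
    · simp [G, image_eq_zero_of_notMem_tsupport (fun h => ht (hχ h))]
  have hG_smooth : ContDiff ℝ (n - m : ℕ) G := contDiff_of_eq_pow_mul hmn.le
    (hf.contDiff_smul_of_tsupport_subset isOpen_ball χ.contDiff hχ) hG hχfG
  have hgG : EqOn G g (ball 0 (ε / 4)) := fun t ht => by simp [G, hχ_one t ht]
  refine ⟨ε / 4, by positivity, hG_smooth.contDiffOn.congr hgG.symm, fun hg0 => hmax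
    ⟨dslope G 0, ε / 4, by positivity, ?_, fun t ht => ?_⟩⟩
  · have hG_diff : Differentiable ℝ G :=
      hG_smooth.differentiable (by exact_mod_cast (Nat.sub_pos_of_lt hmn).ne')
    exact ((continuousOn_dslope Filter.univ_mem).2 ⟨hG.continuousOn, hG_diff 0⟩).mono
      (subset_univ _)
  · have hG0 : G 0 = 0 := by rw [hgG (mem_ball_self (by positivity)), hg0]
    have hG_factor : G t = t * dslope G 0 t := by
      simpa [hG0] using (sub_smul_dslope G 0 t).symm
    rw [heq t (ball_subset_ball (by linarith) ht), ← hgG ht, hG_factor]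
    ring
end

section
/- Let G be a finite group acting linearly and orthogonally on a finite-dimensional real inner product space V, let σ : V → ℝⁿ be a map whose components are G-invariant polynomials that separate G-orbits, with σ proper and σ⁻¹(0) = {0}. If c : ℝ → σ(V) ⊆ ℝⁿ is continuous, then the map t ↦ distance from 0 to σ⁻¹(c(t)) is continuous; in particular, any lift c̄ : ℝ → V of c (i.e., σ ∘ c̄ = c) is continuous at every point t₀ with c(t₀) = 0, provided the first component of σ is v ↦ ⟨v,v⟩. -/
open Metric RealInnerProductSpace

/-- For a finite group `G` acting orthogonally on a Euclidean space `V` with an orbit map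
`σ` whose components are `G`-invariant polynomials separating orbits, `σ` proper and
`σ⁻¹(0) = {0}` and first component `v ↦ ⟨v,v⟩`: for a continuous curve `c` into `σ(V)`,
the distance from `0` to the fiber `σ⁻¹(c(t))` depends continuously on `t`, and any lift
of `c` is continuous at every point where `c` vanishes. -/
theorem lift_continuous_at_zeros_of_finite_group
    (G : Type*) [Group G] [Finite G] (d n : ℕ) (hn : 0 < n)
    (ρ : G →* (EuclideanSpace ℝ (Fin d) ≃ₗᵢ[ℝ] EuclideanSpace ℝ (Fin d)))
    (P : Fin n → MvPolynomial (Fin d) ℝ)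
    (σ : EuclideanSpace ℝ (Fin d) → (Fin n → ℝ))
    (hσP : ∀ v i, σ v i = MvPolynomial.eval (fun j => v j) (P i))
    (hinv : ∀ (g : G) v, σ (ρ g v) = σ v)
    (hsep : ∀ v w, σ v = σ w ↔ ∃ g : G, ρ g v = w)
    (hproper : IsProperMap σ)
    (hfib0 : ∀ v, σ v = 0 ↔ v = 0)
    (hσ1 : ∀ v, σ v ⟨0, hn⟩ = ⟪v, v⟫)
    (c : ℝ → (Fin n → ℝ)) (hc : Continuous c)
    (hcim : ∀ t, c t ∈ Set.range σ) :
    Continuous (fun t => Metric.infDist 0 (σ ⁻¹' {c t})) ∧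
    ∀ (cbar : ℝ → EuclideanSpace ℝ (Fin d)), (∀ t, σ (cbar t) = c t) →
      ∀ t₀, c t₀ = 0 → ContinuousAt cbar t₀ := by
  -- every point of the fiber has norm √(c t ⟨0,hn⟩)
  have hnorm : ∀ (w : EuclideanSpace ℝ (Fin d)) t, σ w = c t →
      ‖w‖ = Real.sqrt (c t ⟨0, hn⟩) := by
    intro w t hw
    have h1 : c t ⟨0, hn⟩ = ⟪w, w⟫ := by rw [← hw]; exact hσ1 w
    rw [h1, real_inner_self_eq_norm_sq, Real.sqrt_sq (norm_nonneg w)]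
  have key : ∀ t, Metric.infDist 0 (σ ⁻¹' {c t}) = Real.sqrt (c t ⟨0, hn⟩) := by
    intro t
    obtain ⟨v, hv⟩ := hcim t
    have hvmem : v ∈ σ ⁻¹' {c t} := hv
    have hne : (σ ⁻¹' {c t}).Nonempty := ⟨v, hvmem⟩
    apply le_antisymm
    · calc Metric.infDist 0 (σ ⁻¹' {c t}) ≤ dist 0 v := Metric.infDist_le_dist_of_mem hvmem
        _ = ‖v‖ := by rw [dist_comm, dist_zero_right]
        _ = Real.sqrt (c t ⟨0, hn⟩) := hnorm v t hv
    · by_contra h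
      obtain ⟨w, hw, hwlt⟩ := (Metric.infDist_lt_iff hne).mp (not_le.mp h)
      have : ‖w‖ = Real.sqrt (c t ⟨0, hn⟩) := hnorm w t hw
      rw [dist_comm, dist_zero_right, this] at hwlt
      exact lt_irrefl _ hwlt
  constructor
  · simp only [key]
    exact Real.continuous_sqrt.comp ((continuous_apply _).comp hc)
  · intro cbar hcbar t₀ ht₀
    have hcb0 : cbar t₀ = 0 := (hfib0 (cbar t₀)).mp (by rw [hcbar t₀, ht₀])
    rw [ContinuousAt, hcb0]
    rw [tendsto_zero_iff_norm_tendsto_zero]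
    have heq : (fun t => ‖cbar t‖) = fun t => Real.sqrt (c t ⟨0, hn⟩) :=
      funext fun t => hnorm (cbar t) t (hcbar t)
    rw [heq]
    have : Real.sqrt (c t₀ ⟨0, hn⟩) = 0 := by rw [ht₀]; simp
    rw [← this]
    exact (Real.continuous_sqrt.comp ((continuous_apply _).comp hc)).continuousAt
end

section
/- Let G be a compact topological group acting continuously on a topological space V, let σ : V → ℝⁿ be continuous, constant on orbits, and separating orbits. Suppose c : ℝ → σ(V) is continuous and for every t ∈ ℝ and every v ∈ σ⁻¹(c(t)) there exists a local continuous lift of c near t through v. If local lifts can be glued using the group action, then any maximal local continuous lift of c defined on an open interval (a,b) strictly contained in an interval where local lifts exist can be extended to a larger interval. Conclude: c admits a continuous lift on any open interval on which local continuous lifts exist through every point of every fiber. -/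
/-!
Translating by a group element moves a lift through any prescribed point of the fibre, so lifts
on two intervals with a common endpoint glue to a lift on their union. Hence "c has a lift on
`[x, y]`" is a transitive relation on `I` that holds for `y` near `x` (local lifts), and it holds
for all `x, y ∈ I` because `I` is connected. Exhausting `I` by an increasing sequence of compact
intervals and extending the lift from each interval to the next without changing it gives a lift
on all of `I`.
-/

open Metric Set Filter Topology

theorem eqOn_if_le_right {α β : Type*} [LinearOrder α] {f g : α → β} {b : α} (hfg : f b = g b) :
    EqOn (fun t => if t ≤ b then f t else g t) g (Ici b) := by
  intro t (ht : b ≤ t)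
  by_cases h : t ≤ b
  · obtain rfl := le_antisymm h ht
    exact (if_pos h).trans hfg
  · exact if_neg h

section Lifts

variable {G V X T : Type*} [TopologicalSpace V] [TopologicalSpace T]

def IsLiftOn (σ : V → X) (c : T → X) (f : T → V) (s : Set T) : Prop :=
  ContinuousOn f s ∧ ∀ t ∈ s, σ (f t) = c t

variable {σ : V → X} {c : T → X} {f g : T → V} {s s' : Set T}

theorem IsLiftOn.mono (hf : IsLiftOn σ c f s) (hs : s' ⊆ s) : IsLiftOn σ c f s' :=
  ⟨hf.1.mono hs, fun t ht => hf.2 t (hs ht)⟩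

theorem IsLiftOn.congr (hf : IsLiftOn σ c f s) (hg : EqOn g f s) : IsLiftOn σ c g s :=
  ⟨hf.1.congr hg, fun t ht => (hg ht).symm ▸ hf.2 t ht⟩

theorem IsLiftOn.union_of_isClosed (hs : IsClosed s) (hs' : IsClosed s') (hf : IsLiftOn σ c f s)
    (hf' : IsLiftOn σ c f s') : IsLiftOn σ c f (s ∪ s') :=
  ⟨hf.1.union_of_isClosed hf'.1 hs hs', fun t ht => ht.elim (hf.2 t) (hf'.2 t)⟩

theorem IsLiftOn.exists_eq_of_mem [Group G] [MulAction G V] [ContinuousConstSMul G V]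
    (hsep : ∀ v w, σ v = σ w ↔ ∃ g : G, g • v = w) (hf : IsLiftOn σ c f s) {t : T} (ht : t ∈ s)
    {v : V} (hv : σ v = c t) : ∃ f', IsLiftOn σ c f' s ∧ f' t = v := by
  obtain ⟨g, hg⟩ := (hsep (f t) v).1 ((hf.2 t ht).trans hv.symm)
  refine ⟨fun t => g • f t, ⟨hf.1.const_smul g, fun t ht => ?_⟩, hg⟩
  exact ((hsep _ _).2 ⟨g, rfl⟩).symm.trans (hf.2 t ht)

section LinearOrder

variable [LinearOrder T] [OrderClosedTopology T]

theorem IsLiftOn.if_le {a b d : T} (hf : IsLiftOn σ c f (Icc a b)) (hg : IsLiftOn σ c g (Icc b d))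
    (hfg : f b = g b) : IsLiftOn σ c (fun t => if t ≤ b then f t else g t) (Icc a d) :=
  ((hf.congr fun _ ht => if_pos ht.2).union_of_isClosed isClosed_Icc isClosed_Icc
    (hg.congr fun _ ht => eqOn_if_le_right hfg ht.1)).mono Icc_subset_Icc_union_Icc

theorem IsLiftOn.exists_uIcc_trans [Group G] [MulAction G V] [ContinuousConstSMul G V]
    (hsep : ∀ v w, σ v = σ w ↔ ∃ g : G, g • v = w) {x y z : T}
    (hf : IsLiftOn σ c f (uIcc x y)) (hg : IsLiftOn σ c g (uIcc y z)) :
    ∃ F, IsLiftOn σ c F (uIcc x z) := by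
  wlog hxz : x ≤ z generalizing x z f g
  · obtain ⟨F, hF⟩ := this (uIcc_comm y z ▸ hg) (uIcc_comm x y ▸ hf) (le_of_not_ge hxz)
    exact ⟨F, uIcc_comm z x ▸ hF⟩
  rcases lt_or_ge y x with hyx | hxy
  · exact ⟨g, hg.mono (uIcc_subset_uIcc (mem_uIcc_of_le hyx.le hxz) right_mem_uIcc)⟩
  rcases le_or_gt y z with hyz | hzy
  · rw [uIcc_of_le hxy] at hf
    rw [uIcc_of_le hyz] at hg
    obtain ⟨g', hg', hg'y⟩ :=
      hg.exists_eq_of_mem hsep (left_mem_Icc.2 hyz) (hf.2 y (right_mem_Icc.2 hxy))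
    exact ⟨_, uIcc_of_le hxz ▸ hf.if_le hg' hg'y.symm⟩
  · exact ⟨f, hf.mono (uIcc_subset_uIcc left_mem_uIcc (mem_uIcc_of_le hxz hzy.le))⟩

end LinearOrder

end Lifts

theorem exists_isLiftOn_uIcc {G V X : Type*} [Group G] [TopologicalSpace V] [MulAction G V]
    [ContinuousConstSMul G V] {σ : V → X} {c : ℝ → X}
    (hsep : ∀ v w, σ v = σ w ↔ ∃ g : G, g • v = w) {I : Set ℝ} (hI : I.OrdConnected)
    (hloc : ∀ t ∈ I, ∃ U ∈ 𝓝[I] t, ∃ f, IsLiftOn σ c f U) {x y : ℝ} (hx : x ∈ I) (hy : y ∈ I) :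
    ∃ f, IsLiftOn σ c f (uIcc x y) := by
  refine hI.isPreconnected.induction₂ (fun x y => ∃ f, IsLiftOn σ c f (uIcc x y)) (fun t ht => ?_)
    (fun _ _ _ _ _ _ ⟨f, hf⟩ ⟨g, hg⟩ => hf.exists_uIcc_trans hsep hg)
    (fun x y _ _ ⟨f, hf⟩ => ⟨f, uIcc_comm x y ▸ hf⟩) hx hy
  obtain ⟨U, hU, f, hf⟩ := hloc t ht
  obtain ⟨ε, hε, hball⟩ := Metric.mem_nhdsWithin_iff.1 hU
  have hconn : (ball t ε ∩ I).OrdConnected := (Real.ball_eq_Ioo t ε ▸ ordConnected_Ioo).inter hI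
  filter_upwards [inter_mem (mem_nhdsWithin_of_mem_nhds (ball_mem_nhds t hε)) self_mem_nhdsWithin]
    with y hy
  exact ⟨f, hf.mono ((hconn.uIcc_subset ⟨mem_ball_self hε, ht⟩ hy).trans hball)⟩

theorem IsLiftOn.exists_extension {G V X T : Type*} [Group G] [TopologicalSpace V] [MulAction G V]
    [ContinuousConstSMul G V] [TopologicalSpace T] [LinearOrder T] [OrderClosedTopology T]
    {σ : V → X} {c : T → X} (hsep : ∀ v w, σ v = σ w ↔ ∃ g : G, g • v = w)
    {f gl gr : T → V} {p q p' q' : T} (hf : IsLiftOn σ c f (Icc p q)) (hpq : p ≤ q)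
    (hgl : IsLiftOn σ c gl (Icc p' p)) (hp'p : p' ≤ p)
    (hgr : IsLiftOn σ c gr (Icc q q')) (hqq' : q ≤ q') :
    ∃ F, IsLiftOn σ c F (Icc p' q') ∧ EqOn F f (Icc p q) := by
  obtain ⟨gl', hgl', hgl'p⟩ := hgl.exists_eq_of_mem hsep (right_mem_Icc.2 hp'p)
    (hf.2 p (left_mem_Icc.2 hpq))
  have hF₁ := hgl'.if_le hf hgl'p
  obtain ⟨gr', hgr', hgr'q⟩ := hgr.exists_eq_of_mem hsep (left_mem_Icc.2 hqq')
    (hF₁.2 q (right_mem_Icc.2 (hp'p.trans hpq)))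
  refine ⟨_, hF₁.if_le hgr' hgr'q.symm, fun t ht => ?_⟩
  simp only [if_pos ht.2]
  exact eqOn_if_le_right hgl'p ht.1

theorem exists_seq_of_forall_exists_succ {α : Type*} {P : ℕ → α → Prop} {R : ℕ → α → α → Prop}
    (h₀ : ∃ x, P 0 x) (h : ∀ k x, P k x → ∃ y, P (k + 1) y ∧ R k x y) :
    ∃ f : ℕ → α, ∀ k, P k (f k) ∧ R k (f k) (f (k + 1)) := by
  choose x₀ hx₀ using h₀
  choose next hnext using h
  let f : ∀ k, {x // P k x} := fun k =>
    Nat.rec ⟨x₀, hx₀⟩ (fun k x => ⟨next k x.1 x.2, (hnext k x.1 x.2).1⟩) k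
  exact ⟨fun k => (f k).1, fun k => ⟨(f k).2, (hnext k _ _).2⟩⟩

theorem exists_continuousOn_eqOn_of_eqOn_succ {X Y : Type*} [TopologicalSpace X]
    [TopologicalSpace Y] {K : ℕ → Set X} (hK : Monotone K) {f : ℕ → X → Y}
    (hf : ∀ k, ContinuousOn (f k) (K k)) (hfK : ∀ k, EqOn (f (k + 1)) (f k) (K k)) :
    ∃ F : X → Y, ContinuousOn F (⋃ k, interior (K k)) ∧ ∀ k, EqOn F (f k) (K k) := by
  classical
  have hcompat : ∀ j k, j ≤ k → EqOn (f k) (f j) (K j) := by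
    intro j k hjk
    induction k, hjk using Nat.le_induction with
    | base => exact eqOn_refl _ _
    | succ k hjk ih => exact (hfK k).mono (hK hjk) |>.trans ih
  let F : X → Y := fun x => if h : ∃ k, x ∈ K k then f (Nat.find h) x else f 0 x
  have hF : ∀ k, EqOn F (f k) (K k) := fun k x hx => by
    have h : ∃ k, x ∈ K k := ⟨k, hx⟩
    simp only [F, dif_pos h]
    exact (hcompat _ _ (Nat.find_min' h hx) (Nat.find_spec h)).symm
  refine ⟨F, fun x hx => ?_, hF⟩
  obtain ⟨k, hk⟩ := mem_iUnion.1 hx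
  have hK : K k ∈ 𝓝 x := mem_interior_iff_mem_nhds.1 hk
  exact (((hf k).continuousAt hK).congr (eventuallyEq_of_mem hK (hF k)).symm).continuousWithinAt

theorem IsOpen.exists_Icc_exhaustion {I : Set ℝ} (hI : IsOpen I) (hne : I.Nonempty) :
    ∃ a b : ℕ → ℝ, Antitone a ∧ Monotone b ∧ (∀ k, a k ∈ I ∧ b k ∈ I ∧ a k ≤ b k) ∧
      I ⊆ ⋃ k, Ioo (a k) (b k) := by
  have hQ : ∀ t ∈ I, (∃ q : ℚ, (q : ℝ) ∈ I ∧ (q : ℝ) < t) ∧ ∃ q : ℚ, (q : ℝ) ∈ I ∧ t < q := by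
    intro t ht
    obtain ⟨ε, hε, hball⟩ := Metric.isOpen_iff.1 hI t ht
    obtain ⟨q, hq⟩ := exists_rat_btwn (sub_lt_self t hε)
    obtain ⟨r, hr⟩ := exists_rat_btwn (lt_add_of_pos_right t hε)
    refine ⟨⟨q, hball ?_, hq.2⟩, ⟨r, hball ?_, hr.1⟩⟩ <;>
      rw [Real.ball_eq_Ioo] <;> constructor <;> linarith
  obtain ⟨e, he⟩ : ∃ e : ℕ → ℝ, I ∩ range ((↑) : ℚ → ℝ) = range e := by
    refine ((countable_range _).mono inter_subset_right).exists_eq_range ?_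
    obtain ⟨q, hq, -⟩ := (hQ _ hne.some_mem).1
    exact ⟨q, hq, q, rfl⟩
  have heI : ∀ k, e k ∈ I := fun k => (he.symm.subset (mem_range_self k)).1
  have hmem : ∀ q : ℚ, (q : ℝ) ∈ I → ∃ k, e k = q := fun q hq => he.subset ⟨hq, q, rfl⟩
  have hrange : ∀ {i k}, i ≤ k → i ∈ Finset.range (k + 1) := fun h => Finset.mem_range.2 (by omega)
  let a k := (Finset.range (k + 1)).inf' Finset.nonempty_range_add_one e
  let b k := (Finset.range (k + 1)).sup' Finset.nonempty_range_add_one e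
  refine ⟨a, b, fun j k hjk => Finset.inf'_mono e ?_ _, fun j k hjk => Finset.sup'_mono e ?_ _,
    fun k => ⟨?_, ?_, ?_⟩, fun t ht => ?_⟩
  · exact Finset.range_subset_range.2 (by omega)
  · exact Finset.range_subset_range.2 (by omega)
  · obtain ⟨i, -, hi⟩ := (Finset.range (k + 1)).exists_mem_eq_inf' Finset.nonempty_range_add_one e
    rw [show a k = e i from hi]
    exact heI i
  · obtain ⟨i, -, hi⟩ := (Finset.range (k + 1)).exists_mem_eq_sup' Finset.nonempty_range_add_one e
    rw [show b k = e i from hi]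
    exact heI i
  · exact (Finset.inf'_le e (hrange k.zero_le)).trans (Finset.le_sup' e (hrange k.zero_le))
  obtain ⟨⟨q, hqI, hqt⟩, ⟨r, hrI, htr⟩⟩ := hQ t ht
  obtain ⟨i, hi⟩ := hmem q hqI
  obtain ⟨j, hj⟩ := hmem r hrI
  exact mem_iUnion.2 ⟨max i j, (Finset.inf'_le e (hrange (le_max_left i j))).trans_lt (hi ▸ hqt),
    (hj ▸ htr).trans_le (Finset.le_sup' e (hrange (le_max_right i j)))⟩

theorem continuous_lift_on_interval_general
    (G : Type*) [Group G] [TopologicalSpace G]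
    (V : Type*) [TopologicalSpace V] [MulAction G V] [ContinuousSMul G V]
    (n : ℕ) (σ : V → (Fin n → ℝ))
    (hsep : ∀ v w, σ v = σ w ↔ ∃ g : G, g • v = w)
    (c : ℝ → (Fin n → ℝ))
    (hcim : ∀ t, c t ∈ Set.range σ)
    (I : Set ℝ) (hIopen : IsOpen I) (hIconn : I.OrdConnected)
    (hloc : ∀ t ∈ I, ∀ v : V, σ v = c t →
      ∃ ε > (0 : ℝ), ∃ cl : ℝ → V, cl t = v ∧
        ContinuousOn cl (ball t ε ∩ I) ∧ ∀ s ∈ ball t ε ∩ I, σ (cl s) = c s) :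
    ∃ cbar : ℝ → V, ContinuousOn cbar I ∧ ∀ t ∈ I, σ (cbar t) = c t := by
  obtain ⟨v, -⟩ := hcim 0
  rcases I.eq_empty_or_nonempty with rfl | hne
  · exact ⟨fun _ => v, continuousOn_empty _, fun _ => False.elim⟩
  have hlift : ∀ x ∈ I, ∀ y ∈ I, x ≤ y → ∃ f, IsLiftOn σ c f (Icc x y) := by
    refine fun x hx y hy hxy =>
      uIcc_of_le hxy ▸ exists_isLiftOn_uIcc hsep hIconn (fun t ht => ?_) hx hy
    obtain ⟨w, hw⟩ := hcim t
    obtain ⟨ε, hε, f, -, hf⟩ := hloc t ht w hw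
    exact ⟨_, inter_mem (mem_nhdsWithin_of_mem_nhds (ball_mem_nhds t hε)) self_mem_nhdsWithin,
      f, hf⟩
  obtain ⟨a, b, ha, hb, habI, hcover⟩ := hIopen.exists_Icc_exhaustion hne
  obtain ⟨f, hf⟩ := exists_seq_of_forall_exists_succ
    (P := fun k f => IsLiftOn σ c f (Icc (a k) (b k)))
    (R := fun k f F => EqOn F f (Icc (a k) (b k)))
    (hlift _ (habI 0).1 _ (habI 0).2.1 (habI 0).2.2) fun k f hf => by
      obtain ⟨gl, hgl⟩ := hlift _ (habI (k + 1)).1 _ (habI k).1 (ha k.le_succ)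
      obtain ⟨gr, hgr⟩ := hlift _ (habI k).2.1 _ (habI (k + 1)).2.1 (hb k.le_succ)
      exact hf.exists_extension hsep (habI k).2.2 hgl (ha k.le_succ) hgr (hb k.le_succ)
  obtain ⟨F, hFc, hF⟩ := exists_continuousOn_eqOn_of_eqOn_succ
    (fun j k hjk => Icc_subset_Icc (ha hjk) (hb hjk)) (fun k => (hf k).1.1) (fun k => (hf k).2)
  have hIcover : I ⊆ ⋃ k, interior (Icc (a k) (b k)) := by simpa only [interior_Icc] using hcover
  refine ⟨F, hFc.mono hIcover, fun t ht => ?_⟩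
  obtain ⟨k, hk⟩ := mem_iUnion.1 (hcover ht)
  rw [hF k (Ioo_subset_Icc_self hk)]
  exact (hf k).1.2 t (Ioo_subset_Icc_self hk)

/-- Let a compact group `G` act continuously on `V` and let `σ : V → ℝⁿ` be continuous,
constant on orbits and separating orbits. If `c` is a continuous curve into `σ(V)` and
local continuous lifts of `c` exist near every point of an open interval `I` through every
point of the corresponding fiber, then `c` admits a continuous lift on all of `I`. -/
theorem continuous_lift_on_interval
    (G : Type*) [Group G] [TopologicalSpace G] [IsTopologicalGroup G] [CompactSpace G]
    (V : Type*) [TopologicalSpace V] [MulAction G V] [ContinuousSMul G V]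
    (n : ℕ) (σ : V → (Fin n → ℝ)) (hσcont : Continuous σ)
    (hsep : ∀ v w, σ v = σ w ↔ ∃ g : G, g • v = w)
    (c : ℝ → (Fin n → ℝ)) (hc : Continuous c)
    (hcim : ∀ t, c t ∈ Set.range σ)
    (I : Set ℝ) (hIopen : IsOpen I) (hIconn : I.OrdConnected)
    (hloc : ∀ t ∈ I, ∀ v : V, σ v = c t →
      ∃ ε > (0 : ℝ), ∃ cl : ℝ → V, cl t = v ∧
        ContinuousOn cl (ball t ε ∩ I) ∧ ∀ s ∈ ball t ε ∩ I, σ (cl s) = c s) :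
    ∃ cbar : ℝ → V, ContinuousOn cbar I ∧ ∀ t ∈ I, σ (cbar t) = c t :=
  continuous_lift_on_interval_general G V n σ hsep c hcim I hIopen hIconn hloc
end

section
/- Let σ : V → ℝⁿ be the orbit map of an orthogonal representation of a compact group G with homogeneous generators of degrees d₁,…,dₙ. Suppose c̄₍₁₎ : ℝ → V is continuous with σ(c̄₍₁₎(t)) = (t^{-d₁}c₁(t),…,t^{-dₙ}cₙ(t)) for t ≠ 0 and some curve c into σ(V) with cᵢ(t) = t^{dᵢ}·(continuous) near 0. Then c̄(t) := t·c̄₍₁₎(t) is a lift of c near 0 which is differentiable at 0 with derivative c̄₍₁₎(0). -/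
/-- If `c̄₍₁₎` is a continuous curve with `σᵢ(c̄₍₁₎(t)) = t^{-dᵢ} cᵢ(t)` for `t ≠ 0`,
where the `σᵢ` are homogeneous of degree `dᵢ ≥ 1` and `c(0) = 0`, then
`c̄(t) := t · c̄₍₁₎(t)` is a lift of `c` which is differentiable at `0` with derivative
`c̄₍₁₎(0)`. -/
theorem lift_from_scaled_lift
    {V : Type*} [NormedAddCommGroup V] [NormedSpace ℝ V]
    (n : ℕ) (σ : V → (Fin n → ℝ)) (d : Fin n → ℕ) (hd : ∀ i, 1 ≤ d i)
    (hhom : ∀ (s : ℝ) (v : V) (i : Fin n), σ (s • v) i = s ^ d i * σ v i)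
    (c : ℝ → (Fin n → ℝ)) (hc0 : c 0 = 0)
    (cbar₁ : ℝ → V) (hcont : Continuous cbar₁)
    (hlift : ∀ t : ℝ, t ≠ 0 → ∀ i, c t i = t ^ d i * σ (cbar₁ t) i) :
    (∀ t : ℝ, σ (t • cbar₁ t) = c t) ∧
    HasDerivAt (fun t : ℝ => t • cbar₁ t) (cbar₁ 0) 0 := by
  constructor
  · intro t
    funext i
    rcases eq_or_ne t 0 with rfl | ht
    · rw [hhom, zero_pow (by have := hd i; omega), zero_mul, hc0]
      rfl
    · rw [hhom, ← hlift t ht]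
  · rw [hasDerivAt_iff_tendsto_slope]
    have hs : ∀ t ∈ ({(0:ℝ)}ᶜ : Set ℝ),
        slope (fun t : ℝ => t • cbar₁ t) 0 t = cbar₁ t := by
      intro t ht
      simp only [Set.mem_compl_iff, Set.mem_singleton_iff] at ht
      simp [slope, ht, smul_smul, inv_mul_cancel₀ ht]
    refine (Filter.tendsto_congr' ?_).mpr
      ((hcont.tendsto 0).mono_left nhdsWithin_le_nhds)
    exact Filter.eventuallyEq_of_mem self_mem_nhdsWithin hs
end

section
/- Let σ = (σ₁,…,σₙ) : V → ℝⁿ be the orbit map of an orthogonal representation of a compact Lie group G, with σᵢ homogeneous of degree dᵢ and σ separating orbits. Let c̄₁, c̄₂ be two curves defined near t₀ with values in V, both lifts of the same curve c (σ∘c̄ᵢ = c), both one-sided differentiable at t₀ with c̄ᵢ(t₀) = 0. Then c̄₁'(t₀) and c̄₂'(t₀) lie in the same G-orbit. -/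
open Filter Topology

/-!
Homogeneity of `σ` turns `σ ∘ c̄₁ = σ ∘ c̄₂` into the same identity for the difference
quotients `(t - t₀)⁻¹ • c̄ᵢ t`; by continuity of `σ` it passes to their limits `vᵢ`, and
`σ` separates orbits.
-/

theorem map_smul_eq_map_smul_of_homogeneous {V : Type*} [AddCommGroup V] [Module ℝ V] {n : ℕ}
    {σ : V → (Fin n → ℝ)} {d : Fin n → ℕ}
    (hhom : ∀ (s : ℝ) (v : V) (i : Fin n), σ (s • v) i = s ^ d i * σ v i)
    {v w : V} (h : σ v = σ w) (s : ℝ) : σ (s • v) = σ (s • w) := by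
  funext i
  rw [hhom, hhom, h]

theorem Continuous.eq_of_tendsto_of_comp_eq {α X Y : Type*} [TopologicalSpace X]
    [TopologicalSpace Y] [T2Space Y] {σ : X → Y} (hσ : Continuous σ) {l : Filter α} [l.NeBot]
    {f g : α → X} {x y : X} (hf : Tendsto f l (𝓝 x)) (hg : Tendsto g l (𝓝 y))
    (hfg : ∀ a, σ (f a) = σ (g a)) : σ x = σ y :=
  tendsto_nhds_unique ((hσ.tendsto x).comp hf) <| by
    simpa only [Function.comp_def, hfg] using (hσ.tendsto y).comp hg

theorem onesided_derivatives_same_orbit_general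
    (G : Type*) [Group G]
    {V : Type*} [NormedAddCommGroup V] [InnerProductSpace ℝ V]
    (ρ : G →* (V ≃ₗᵢ[ℝ] V))
    (n : ℕ) (σ : V → (Fin n → ℝ)) (hσcont : Continuous σ)
    (d : Fin n → ℕ)
    (hhom : ∀ (s : ℝ) (v : V) (i : Fin n), σ (s • v) i = s ^ d i * σ v i)
    (hsep : ∀ v w, σ v = σ w ↔ ∃ g : G, ρ g v = w)
    (t₀ : ℝ) (cbar₁ cbar₂ : ℝ → V)
    (hsame : ∀ t, σ (cbar₁ t) = σ (cbar₂ t))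
    (v₁ v₂ : V)
    (hd₁ : Tendsto (fun t => (t - t₀)⁻¹ • cbar₁ t) (𝓝[>] t₀) (𝓝 v₁))
    (hd₂ : Tendsto (fun t => (t - t₀)⁻¹ • cbar₂ t) (𝓝[>] t₀) (𝓝 v₂)) :
    ∃ g : G, ρ g v₂ = v₁ :=
  (hsep v₂ v₁).mp <| hσcont.eq_of_tendsto_of_comp_eq hd₂ hd₁ fun t =>
    map_smul_eq_map_smul_of_homogeneous hhom (hsame t).symm _

/-- If `c̄₁, c̄₂` are two lifts of the same curve `c` (for the orbit map `σ` of an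
orthogonal representation of a compact group, with homogeneous components separating
orbits), both one-sided differentiable at `t₀` with `c̄ᵢ(t₀) = 0`, then their one-sided
derivatives at `t₀` lie in the same `G`-orbit. -/
theorem onesided_derivatives_same_orbit
    (G : Type*) [Group G] [TopologicalSpace G] [IsTopologicalGroup G] [CompactSpace G]
    {V : Type*} [NormedAddCommGroup V] [InnerProductSpace ℝ V] [FiniteDimensional ℝ V]
    (ρ : G →* (V ≃ₗᵢ[ℝ] V))
    (hρcont : Continuous (fun p : G × V => ρ p.1 p.2))
    (n : ℕ) (σ : V → (Fin n → ℝ)) (hσcont : Continuous σ)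
    (d : Fin n → ℕ) (hd : ∀ i, 1 ≤ d i)
    (hhom : ∀ (s : ℝ) (v : V) (i : Fin n), σ (s • v) i = s ^ d i * σ v i)
    (hsep : ∀ v w, σ v = σ w ↔ ∃ g : G, ρ g v = w)
    (t₀ : ℝ) (cbar₁ cbar₂ : ℝ → V)
    (hsame : ∀ t, σ (cbar₁ t) = σ (cbar₂ t))
    (h0₁ : cbar₁ t₀ = 0) (h0₂ : cbar₂ t₀ = 0)
    (v₁ v₂ : V)
    (hd₁ : Tendsto (fun t => (t - t₀)⁻¹ • cbar₁ t) (𝓝[>] t₀) (𝓝 v₁))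
    (hd₂ : Tendsto (fun t => (t - t₀)⁻¹ • cbar₂ t) (𝓝[>] t₀) (𝓝 v₂)) :
    ∃ g : G, ρ g v₂ = v₁ :=
  onesided_derivatives_same_orbit_general G ρ n σ hσcont d hhom hsep t₀ cbar₁ cbar₂ hsame v₁ v₂ hd₁
    hd₂
end
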